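/- arXiv:2502.08274 — 2 statements merged into one kernel-verified Lean document; each statement's English description precedes it below -/
import Mathlib

section
/- Let P be a Poisson random variable with parameter x. The centered moment m_s(x) = E[(P − x)^s], viewed as a polynomial in x, has degree ⌊s/2⌋ for s ≥ 2; moreover, for even s = 2m the leading coefficient (coefficient of x^m) equals (2m−1)!! = (2m−1)(2m−3)⋯1. -/
/-!
For a Poisson variable `P` of mean `x`, Stein's identity `E[P f(P)] = x E[f(P + 1)]` applied to
`f(ℓ) = (ℓ - x)^s`, after expanding `(P + 1 - x)^s` binomially, gives the recursion
`m_{s+1} = x ∑_{j<s} C(s, j) m_j` with `m_0 = 1`. So `m_s` is a polynomial with natural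
coefficients, and since `j < s` forces `⌊j/2⌋ + 1 ≤ ⌊(s+1)/2⌋`, its degree is at most `⌊s/2⌋`.
The coefficient of `x^{m+1}` in `m_{2m+2}` only receives the term `j = 2m`, which gives
`(2m+1) (2m-1)‼`; for `m_{2m+1}` with `m ≥ 1`, the term `j = 2m - 2` alone already makes the
coefficient of `x^m` positive.
-/

open Finset Polynomial Real
open scoped Nat

noncomputable def poissonWeight (x : ℝ) (n : ℕ) : ℝ := exp (-x) * x ^ n / n.factorial

noncomputable def poissonCentralMoment (s : ℕ) (x : ℝ) : ℝ :=
  ∑' n : ℕ, poissonWeight x n * ((n : ℝ) - x) ^ s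

theorem tsum_poissonWeight (x : ℝ) : ∑' n : ℕ, poissonWeight x n = 1 := by
  simp only [poissonWeight, mul_div_assoc, tsum_mul_left]
  have hexp : ∑' n : ℕ, x ^ n / n.factorial = exp x := by
    rw [Real.exp_eq_exp_ℝ, NormedSpace.exp_eq_tsum_div]
  rw [hexp, ← exp_add, neg_add_cancel, exp_zero]

theorem poissonWeight_succ_mul (x : ℝ) (n : ℕ) :
    poissonWeight x (n + 1) * (n + 1) = x * poissonWeight x n := by
  simp only [poissonWeight, Nat.factorial_succ, Nat.cast_mul, Nat.cast_succ, pow_succ]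
  field_simp

theorem summable_pow_div_factorial_mul_pow_sub (x : ℝ) (s : ℕ) :
    Summable fun n : ℕ => x ^ n / n.factorial * ((n : ℝ) - x) ^ s := by
  refine .of_norm_bounded
    ((Real.summable_pow_div_factorial (exp 1 * |x|)).mul_left (s.factorial * exp |x|)) fun n => ?_
  have hpow : |(n : ℝ) - x| ^ s ≤ s.factorial * (exp |x| * exp 1 ^ n) := calc
    |(n : ℝ) - x| ^ s ≤ s.factorial * exp |(n : ℝ) - x| := by
      rw [← div_le_iff₀' (by positivity)]; exact pow_div_factorial_le_exp _ (abs_nonneg _) s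
    _ ≤ s.factorial * exp (|x| + n) := by
      gcongr; exact (abs_sub _ _).trans (by rw [Nat.abs_cast]; linarith)
    _ = s.factorial * (exp |x| * exp 1 ^ n) := by rw [exp_add, ← Real.exp_nat_mul, mul_one]
  calc ‖x ^ n / n.factorial * ((n : ℝ) - x) ^ s‖ = |x| ^ n / n.factorial * |(n : ℝ) - x| ^ s := by
        simp
    _ ≤ |x| ^ n / n.factorial * (s.factorial * (exp |x| * exp 1 ^ n)) := by gcongr
    _ = s.factorial * exp |x| * ((exp 1 * |x|) ^ n / n.factorial) := by ring

theorem summable_poissonWeight_mul_pow_sub (x : ℝ) (s : ℕ) :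
    Summable fun n : ℕ => poissonWeight x n * ((n : ℝ) - x) ^ s := by
  simpa only [poissonWeight, mul_div_assoc, mul_assoc] using
    (summable_pow_div_factorial_mul_pow_sub x s).mul_left (exp (-x))

theorem tsum_poissonWeight_mul_nat_mul (x : ℝ) (f : ℕ → ℝ) :
    ∑' n : ℕ, poissonWeight x n * (n * f n) = x * ∑' n : ℕ, poissonWeight x n * f (n + 1) := by
  have hsupp :
      (Function.support fun n : ℕ => poissonWeight x n * (n * f n)) ⊆ Set.range Nat.succ := by
    rintro (_ | n) h
    · simp at h
    · exact ⟨n, rfl⟩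
  rw [← Nat.succ_injective.tsum_eq hsupp, ← tsum_mul_left]
  congr 1 with n
  rw [Nat.succ_eq_add_one, Nat.cast_succ, ← mul_assoc, ← mul_assoc, poissonWeight_succ_mul]

theorem poissonCentralMoment_zero (x : ℝ) : poissonCentralMoment 0 x = 1 := by
  simpa [poissonCentralMoment] using tsum_poissonWeight x

theorem poissonCentralMoment_succ (s : ℕ) (x : ℝ) :
    poissonCentralMoment (s + 1) x =
      x * ∑ j ∈ range s, (s.choose j : ℝ) * poissonCentralMoment j x := by
  have hsum := summable_poissonWeight_mul_pow_sub x
  have hstein : ∑' n : ℕ, poissonWeight x n * (n * ((n : ℝ) - x) ^ s) =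
      x * ∑ j ∈ range (s + 1), (s.choose j : ℝ) * poissonCentralMoment j x := by
    rw [tsum_poissonWeight_mul_nat_mul]
    congr 1
    have hbinom : ∀ n : ℕ, poissonWeight x n * (((n + 1 : ℕ) : ℝ) - x) ^ s =
        ∑ j ∈ range (s + 1), (s.choose j : ℝ) * (poissonWeight x n * ((n : ℝ) - x) ^ j) := by
      intro n
      rw [Nat.cast_succ, add_sub_right_comm, add_pow, mul_sum]
      refine sum_congr rfl fun j _ => ?_
      ring
    simp only [poissonCentralMoment, hbinom, ← tsum_mul_left]
    exact Summable.tsum_finsetSum fun j _ => (hsum j).mul_left _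
  have hsplit : ∑' n : ℕ, poissonWeight x n * (n * ((n : ℝ) - x) ^ s) =
      poissonCentralMoment (s + 1) x + x * poissonCentralMoment s x := by
    rw [poissonCentralMoment, poissonCentralMoment, ← tsum_mul_left,
      ← (hsum (s + 1)).tsum_add ((hsum s).mul_left x)]
    congr 1 with n
    ring
  rw [sum_range_succ, Nat.choose_self] at hstein
  linear_combination hsplit.symm.trans hstein

noncomputable def poissonCentralMomentPoly : ℕ → ℕ[X]
  | 0 => 1
  | s + 1 => X * ∑ j : Fin s, s.choose j • poissonCentralMomentPoly j

theorem poissonCentralMomentPoly_succ (s : ℕ) :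
    poissonCentralMomentPoly (s + 1) =
      X * ∑ j ∈ range s, s.choose j • poissonCentralMomentPoly j := by
  rw [poissonCentralMomentPoly, Fin.sum_univ_eq_sum_range (fun j => s.choose j • _)]

theorem coeff_poissonCentralMomentPoly_succ_succ (s n : ℕ) :
    (poissonCentralMomentPoly (s + 1)).coeff (n + 1) =
      ∑ j ∈ range s, s.choose j * (poissonCentralMomentPoly j).coeff n := by
  simp [poissonCentralMomentPoly_succ, coeff_X_mul]

theorem coeff_poissonCentralMomentPoly_eq_zero {s n : ℕ} (h : s / 2 < n) :
    (poissonCentralMomentPoly s).coeff n = 0 := by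
  induction s using Nat.strong_induction_on generalizing n with
  | _ s ih =>
    match s, n with
    | 0, n => simp [poissonCentralMomentPoly, coeff_one, Nat.pos_iff_ne_zero.mp h]
    | s + 1, 0 => omega
    | s + 1, n + 1 =>
      rw [coeff_poissonCentralMomentPoly_succ_succ]
      refine sum_eq_zero fun j hj => ?_
      rw [mem_range] at hj
      rw [ih j (by omega) (by omega), mul_zero]

theorem natDegree_poissonCentralMomentPoly_le (s : ℕ) :
    (poissonCentralMomentPoly s).natDegree ≤ s / 2 :=
  natDegree_le_iff_coeff_eq_zero.mpr fun _ h => coeff_poissonCentralMomentPoly_eq_zero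
    (by exact_mod_cast h)

theorem coeff_poissonCentralMomentPoly_two_mul (m : ℕ) :
    (poissonCentralMomentPoly (2 * m)).coeff m = (2 * m - 1)‼ := by
  induction m with
  | zero => simp [poissonCentralMomentPoly]
  | succ m ih =>
    rw [show 2 * (m + 1) = 2 * m + 1 + 1 by ring, coeff_poissonCentralMomentPoly_succ_succ,
      sum_eq_single_of_mem (2 * m) (by simp), ih, Nat.choose_succ_self_right,
      Nat.add_sub_cancel, Nat.doubleFactorial_add_one]
    intro j hj hne
    rw [mem_range] at hj
    rw [coeff_poissonCentralMomentPoly_eq_zero (by omega), mul_zero]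

theorem coeff_poissonCentralMomentPoly_half_ne_zero {s : ℕ} (hs : s ≠ 1) :
    (poissonCentralMomentPoly s).coeff (s / 2) ≠ 0 := by
  match s with
  | 0 => simp [poissonCentralMomentPoly]
  | s + 1 =>
    obtain ⟨k, hk⟩ : ∃ k, (s + 1) / 2 = k + 1 := ⟨(s - 1) / 2, by omega⟩
    rw [hk, coeff_poissonCentralMomentPoly_succ_succ]
    refine (sum_pos' (fun _ _ => Nat.zero_le _) ⟨2 * k, mem_range.mpr (by omega), ?_⟩).ne'
    rw [coeff_poissonCentralMomentPoly_two_mul]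
    exact Nat.mul_pos (Nat.choose_pos (by omega)) (Nat.doubleFactorial_pos _)

theorem natDegree_poissonCentralMomentPoly (s : ℕ) :
    (poissonCentralMomentPoly s).natDegree = s / 2 := by
  rcases eq_or_ne s 1 with rfl | hs
  · -- `m_1 = 0`, and `natDegree 0 = 0 = 1 / 2`.
    simp [poissonCentralMomentPoly]
  · exact (natDegree_poissonCentralMomentPoly_le s).antisymm
      (le_natDegree_of_ne_zero (coeff_poissonCentralMomentPoly_half_ne_zero hs))

theorem aeval_poissonCentralMomentPoly (s : ℕ) (x : ℝ) :
    aeval x (poissonCentralMomentPoly s) = poissonCentralMoment s x := by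
  induction s using Nat.strong_induction_on with
  | _ s ih =>
    match s with
    | 0 => simp [poissonCentralMomentPoly, poissonCentralMoment_zero]
    | s + 1 =>
      rw [poissonCentralMomentPoly_succ, poissonCentralMoment_succ]
      simp only [map_mul, aeval_X, map_sum, nsmul_eq_mul, map_natCast]
      congr 1
      exact sum_congr rfl fun j hj => by rw [ih j (by simp at hj; omega)]

theorem poisson_centered_moment_polynomial_degree_general
    (s : ℕ) (p : Polynomial ℝ)
    (hp : ∀ x : ℝ, 0 ≤ x →
      p.eval x = ∑' ℓ : ℕ, Real.exp (-x) * x ^ ℓ / ℓ.factorial * ((ℓ : ℝ) - x) ^ s) :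
    p.natDegree = s / 2
    ∧ ∀ m : ℕ, s = 2 * m → p.coeff m = (Nat.doubleFactorial (2 * m - 1) : ℝ) := by
  obtain rfl : p = (poissonCentralMomentPoly s).map (algebraMap ℕ ℝ) := by
    refine eq_of_infinite_eval_eq _ _ ((Set.Ici_infinite 0).mono fun x hx => ?_)
    rw [Set.mem_ofPred_eq, eval_map_algebraMap, aeval_poissonCentralMomentPoly]
    exact hp x hx
  refine ⟨?_, fun m hm => ?_⟩
  · rw [natDegree_map_eq_of_injective (FaithfulSMul.algebraMap_injective ℕ ℝ),
      natDegree_poissonCentralMomentPoly]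
  · rw [coeff_map, hm, coeff_poissonCentralMomentPoly_two_mul, eq_natCast]

theorem poisson_centered_moment_polynomial_degree
    (s : ℕ) (hs : 2 ≤ s) (p : Polynomial ℝ)
    (hp : ∀ x : ℝ, 0 ≤ x →
      p.eval x = ∑' ℓ : ℕ, Real.exp (-x) * x ^ ℓ / ℓ.factorial * ((ℓ : ℝ) - x) ^ s) :
    p.natDegree = s / 2
    ∧ ∀ m : ℕ, s = 2 * m → p.coeff m = (Nat.doubleFactorial (2 * m - 1) : ℝ) :=
  poisson_centered_moment_polynomial_degree_general s p hp
end

section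
/- Let X be a nonnegative random variable with finite moments of all orders and Y such that conditionally on X, Y ~ Poisson(ρX). Then for every s ≥ 0, E[(Y − ρX)^s] = Σ_{k=0}^{s} ρ^k E[X^k] S_2(s,k), where S_2(s,k) counts partitions of an s-set into k blocks of size at least 2. -/
open MeasureTheory ProbabilityTheory Filter Real Finset

/-- `Y` is, conditionally on `X`, Poisson distributed with rate `ρ * X`. -/
def CondPoisson {Ω : Type*} [MeasurableSpace Ω] (μ : Measure Ω)
    (X : Ω → ℝ) (Y : Ω → ℕ) (ρ : ℝ) : Prop :=
  ∀ (ℓ : ℕ) (A : Set ℝ), MeasurableSet A →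
    μ {ω | X ω ∈ A ∧ Y ω = ℓ}
      = ∫⁻ ω in {ω | X ω ∈ A},
          ENNReal.ofReal ((ρ * X ω) ^ ℓ * Real.exp (-(ρ * X ω)) / ℓ.factorial) ∂μ

/-- Associated Stirling numbers of the second kind: the number of partitions of
an `s`-element set into exactly `k` blocks, each of size at least `2`. -/
noncomputable def assocStirling (s k : ℕ) : ℕ :=
  Nat.card {P : Finset (Finset (Fin s)) //
    P.card = k ∧ (∀ B ∈ P, 2 ≤ B.card) ∧ ∀ x : Fin s, ∃! B, B ∈ P ∧ x ∈ B}

open scoped NNReal Nat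

/-!
Conditionally on `X = x`, `Y - ρ x` is a centred Poisson variable of rate `λ = ρ x`, so it
suffices to show `E (N - λ) ^ s = ∑ k, S₂(s, k) λ ^ k` for `N ~ Poisson(λ)` and to integrate
this polynomial identity in `λ = ρ X`. Both sides obey the recurrence
`m (s + 1) = λ ∑ j < s, (s choose j) m j`: the Poisson moments because `E[N g(N)] = λ E[g(N + 1)]`,
the associated Stirling polynomials because a partition of `{0, …, s}` is the block `B` of `s`
(with `|B| - 1 = s - j ≥ 1` further elements) together with a partition of the `j` remaining
points. The hypothesis on `(X, Y)` says that their joint law is the law of `X` composed with the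
kernel `x ↦ Poisson(ρ x)`; Fubini applies because `E |N - λ| ^ s ≤ 1 + E (N - λ) ^ (2 s)` is a
polynomial in `λ` and `X` has all moments.
-/

lemma Finset.sum_ssubsets_apply_card {α M : Type*} [DecidableEq α] [AddCancelCommMonoid M]
    (f : ℕ → M) (A : Finset α) :
    ∑ T ∈ A.ssubsets, f #T = ∑ j ∈ range #A, (#A).choose j • f j := by
  have h := sum_powerset_apply_card f (x := A)
  rw [← sum_erase_add _ _ (mem_powerset_self A), sum_range_succ, Nat.choose_self, one_smul] at h
  exact add_right_cancel h

section AssocPartitions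

variable {α β : Type*}

open Classical in
noncomputable def assocPartitions (A : Finset α) (k : ℕ) : Finset (Finset (Finset α)) :=
  A.powerset.powerset.filter
    fun P => #P = k ∧ (∀ B ∈ P, 2 ≤ #B) ∧ ∀ x ∈ A, ∃! B, B ∈ P ∧ x ∈ B

variable {A : Finset α} {k : ℕ} {P : Finset (Finset α)}

lemma mem_assocPartitions :
    P ∈ assocPartitions A k ↔
      (∀ B ∈ P, B ⊆ A) ∧ #P = k ∧ (∀ B ∈ P, 2 ≤ #B) ∧ ∀ x ∈ A, ∃! B, B ∈ P ∧ x ∈ B := by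
  simp only [assocPartitions, mem_filter, mem_powerset, subset_iff (s₂ := A.powerset)]

lemma eq_of_mem_assocPartitions (hP : P ∈ assocPartitions A k) {B₁ B₂ : Finset α} {x : α}
    (h₁ : B₁ ∈ P) (h₂ : B₂ ∈ P) (hx₁ : x ∈ B₁) (hx₂ : x ∈ B₂) : B₁ = B₂ := by
  obtain ⟨hsub, -, -, huniq⟩ := mem_assocPartitions.1 hP
  exact (huniq x (hsub B₁ h₁ hx₁)).unique ⟨h₁, hx₁⟩ ⟨h₂, hx₂⟩

lemma card_assocPartitions_univ (s k : ℕ) :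
    #(assocPartitions (univ : Finset (Fin s)) k) = assocStirling s k := by
  classical
  rw [assocStirling, Nat.card_eq_fintype_card, Fintype.card_subtype]
  congr 1
  ext P
  simp [mem_assocPartitions]

lemma map_mem_assocPartitions_map_iff (f : α ↪ β) :
    P.map (mapEmbedding f).toEmbedding ∈ assocPartitions (A.map f) k ↔
      P ∈ assocPartitions A k := by
  set G := (mapEmbedding f).toEmbedding
  have huniq (x : α) : (∃! B, B ∈ P.map G ∧ f x ∈ B) ↔ ∃! C, C ∈ P ∧ x ∈ C := by
    constructor
    · rintro ⟨B, ⟨hB, hxB⟩, hu⟩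
      obtain ⟨C, hC, rfl⟩ := Finset.mem_map.1 hB
      refine ⟨C, ⟨hC, by simpa [G] using hxB⟩, fun D hD => G.injective ?_⟩
      exact hu _ ⟨mem_map_of_mem _ hD.1, by simpa [G] using hD.2⟩
    · rintro ⟨C, ⟨hC, hxC⟩, hu⟩
      refine ⟨G C, ⟨mem_map_of_mem _ hC, by simpa [G] using hxC⟩, ?_⟩
      rintro B ⟨hB, hxB⟩
      obtain ⟨D, hD, rfl⟩ := Finset.mem_map.1 hB
      rw [hu D ⟨hD, by simpa [G] using hxB⟩]
  simp only [mem_assocPartitions, forall_mem_map, card_map, huniq]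
  simp [G]

lemma card_assocPartitions_map (f : α ↪ β) (A : Finset α) (k : ℕ) :
    #(assocPartitions (A.map f) k) = #(assocPartitions A k) := by
  set G := (mapEmbedding f).toEmbedding
  suffices assocPartitions (A.map f) k = (assocPartitions A k).map (mapEmbedding G).toEmbedding by
    rw [this, card_map]
  ext Q
  refine ⟨fun hQ => ?_, ?_⟩
  · obtain ⟨P, -, rfl⟩ : ∃ P ⊆ A.powerset, Q = P.map G := by
      refine subset_map_iff.1 fun B hB => ?_
      obtain ⟨C, hC, rfl⟩ := subset_map_iff.1 ((mem_assocPartitions.1 hQ).1 B hB)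
      exact mem_map_of_mem G (mem_powerset.2 hC)
    exact mem_map_of_mem (mapEmbedding G).toEmbedding ((map_mem_assocPartitions_map_iff f).1 hQ)
  · rw [Finset.mem_map]
    rintro ⟨P, hP, rfl⟩
    exact (map_mem_assocPartitions_map_iff f).2 hP

lemma card_assocPartitions (A : Finset α) (k : ℕ) :
    #(assocPartitions A k) = assocStirling #A k := by
  rw [← card_assocPartitions_univ, ← card_assocPartitions_map
    (A.equivFin.symm.toEmbedding.trans (Function.Embedding.subtype (· ∈ A)))]
  congr
  ext x
  simp only [Finset.mem_map, mem_univ, true_and, Function.Embedding.trans_apply,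
    Equiv.coe_toEmbedding, Function.Embedding.subtype_apply]
  exact ⟨fun hx => ⟨A.equivFin ⟨x, hx⟩, by simp⟩, fun ⟨i, hi⟩ => hi ▸ (A.equivFin.symm i).2⟩

variable [DecidableEq α] {a : α}

lemma insert_mem_assocPartitions_insert (ha : a ∉ A) {T : Finset α} (hT : T ⊂ A)
    {Q : Finset (Finset α)} (hQ : Q ∈ assocPartitions T k) :
    insert (insert a (A \ T)) Q ∈ assocPartitions (insert a A) (k + 1) := by
  obtain ⟨hsub, hcard, hsize, huniq⟩ := mem_assocPartitions.1 hQ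
  have hQa : ∀ C ∈ Q, a ∉ C := fun C hC haC => ha (hT.subset (hsub C hC haC))
  have hnotin : insert a (A \ T) ∉ Q := fun h => hQa _ h (mem_insert_self _ _)
  refine mem_assocPartitions.2 ⟨?_, by rw [card_insert_of_notMem hnotin, hcard], ?_, ?_⟩
  · simp only [forall_mem_insert]
    exact ⟨insert_subset_insert a sdiff_subset,
      fun C hC => (hsub C hC).trans (hT.subset.trans (subset_insert a A))⟩
  · simp only [forall_mem_insert]
    refine ⟨?_, hsize⟩
    rw [card_insert_of_notMem fun h => ha (mem_sdiff.1 h).1]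
    exact Nat.succ_le_succ (card_pos.2 (sdiff_nonempty.2 (not_subset_of_ssubset hT)))
  · intro x hx
    by_cases hxT : x ∈ T
    · obtain ⟨C, ⟨hC, hxC⟩, hCu⟩ := huniq x hxT
      refine ⟨C, ⟨mem_insert_of_mem hC, hxC⟩, ?_⟩
      rintro B ⟨hB, hxB⟩
      rcases mem_insert.1 hB with rfl | hBQ
      · rcases mem_insert.1 hxB with rfl | hxB
        · exact absurd (hT.subset hxT) ha
        · exact absurd hxT (mem_sdiff.1 hxB).2
      · exact hCu B ⟨hBQ, hxB⟩
    · have hxC : x ∈ insert a (A \ T) := by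
        rcases mem_insert.1 hx with rfl | hxA
        · exact mem_insert_self _ _
        · exact mem_insert_of_mem (mem_sdiff.2 ⟨hxA, hxT⟩)
      refine ⟨_, ⟨mem_insert_self _ _, hxC⟩, ?_⟩
      rintro B ⟨hB, hxB⟩
      rcases mem_insert.1 hB with rfl | hBQ
      · rfl
      · exact absurd (hsub B hBQ hxB) hxT

lemma erase_mem_assocPartitions_sdiff (hP : P ∈ assocPartitions (insert a A) (k + 1))
    {B : Finset α} (hB : B ∈ P) (haB : a ∈ B) : P.erase B ∈ assocPartitions (A \ B) k := by
  obtain ⟨hsub, hcard, hsize, huniq⟩ := mem_assocPartitions.1 hP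
  refine mem_assocPartitions.2 ⟨?_, by rw [card_erase_of_mem hB, hcard, Nat.add_sub_cancel],
    fun C hC => hsize C (mem_of_mem_erase hC), ?_⟩
  · intro C hC x hxC
    obtain ⟨hCB, hC⟩ := mem_erase.1 hC
    have hxB : x ∉ B := fun hxB => hCB (eq_of_mem_assocPartitions hP hC hB hxC hxB)
    have hxA : x ∈ A := (mem_insert.1 (hsub C hC hxC)).resolve_left fun hxa => hxB (hxa ▸ haB)
    exact mem_sdiff.2 ⟨hxA, hxB⟩
  · intro x hx
    obtain ⟨hxA, hxB⟩ := mem_sdiff.1 hx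
    obtain ⟨C, ⟨hC, hxC⟩, hCu⟩ := huniq x (mem_insert_of_mem hxA)
    refine ⟨C, ⟨mem_erase.2 ⟨ne_of_mem_of_not_mem' hxC hxB, hC⟩, hxC⟩, ?_⟩
    rintro D ⟨hD, hxD⟩
    exact hCu D ⟨mem_of_mem_erase hD, hxD⟩

lemma card_assocPartitions_insert (ha : a ∉ A) :
    #(assocPartitions (insert a A) (k + 1)) = ∑ T ∈ A.ssubsets, #(assocPartitions T k) := by
  rw [← card_sigma]
  symm
  refine card_bij (fun p _ => insert (insert a (A \ p.1)) p.2) ?_ ?_ ?_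
  · rintro ⟨T, Q⟩ h
    simp only [mem_sigma, mem_ssubsets] at h
    exact insert_mem_assocPartitions_insert ha h.1 h.2
  · rintro ⟨T₁, Q₁⟩ h₁ ⟨T₂, Q₂⟩ h₂ h
    simp only [mem_sigma, mem_ssubsets] at h₁ h₂ h
    have hP := insert_mem_assocPartitions_insert ha h₁.1 h₁.2
    have hblock : insert a (A \ T₁) = insert a (A \ T₂) := eq_of_mem_assocPartitions hP
      (mem_insert_self _ _) (h ▸ mem_insert_self _ _) (mem_insert_self _ _) (mem_insert_self _ _)
    obtain rfl : T₁ = T₂ := by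
      rw [← Finset.sdiff_sdiff_eq_self h₁.1.subset, ← Finset.sdiff_sdiff_eq_self h₂.1.subset,
        ← erase_insert (s := A \ T₁) fun h => ha (mem_sdiff.1 h).1, hblock,
        erase_insert fun h => ha (mem_sdiff.1 h).1]
    have hnotin (Q) (hQ : Q ∈ assocPartitions T₁ k) : insert a (A \ T₁) ∉ Q := fun hmem =>
      ha (h₁.1.subset ((mem_assocPartitions.1 hQ).1 _ hmem (mem_insert_self _ _)))
    rw [← erase_insert (hnotin Q₁ h₁.2), h, erase_insert (hnotin Q₂ h₂.2)]
  · intro P hP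
    obtain ⟨hsub, -, hsize, huniq⟩ := mem_assocPartitions.1 hP
    obtain ⟨B, ⟨hB, haB⟩, -⟩ := huniq a (mem_insert_self a A)
    have hBA : insert a (A \ (A \ B)) = B := by
      ext x
      have := @hsub B hB x
      simp only [mem_insert, Finset.mem_sdiff] at this ⊢
      grind
    have hssub : A \ B ⊂ A := by
      obtain ⟨x, hxB, hxa⟩ := exists_mem_ne (hsize B hB) a
      have hxA : x ∈ A := (mem_insert.1 (hsub B hB hxB)).resolve_left hxa
      exact (ssubset_iff_of_subset sdiff_subset).2 ⟨x, hxA, fun h => (mem_sdiff.1 h).2 hxB⟩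
    refine ⟨⟨A \ B, P.erase B⟩, ?_, ?_⟩
    · simp only [mem_sigma, mem_ssubsets]
      exact ⟨hssub, erase_mem_assocPartitions_sdiff hP hB haB⟩
    · simp only [hBA, insert_erase hB]

end AssocPartitions

lemma assocStirling_zero_zero : assocStirling 0 0 = 1 := by
  rw [← card_assocPartitions_univ, card_eq_one]
  refine ⟨∅, eq_singleton_iff_unique_mem.2 ⟨?_, fun P hP => ?_⟩⟩
  · simp [mem_assocPartitions]
  · exact card_eq_zero.1 (mem_assocPartitions.1 hP).2.1

lemma assocStirling_succ_zero (s : ℕ) : assocStirling (s + 1) 0 = 0 := by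
  rw [← card_assocPartitions_univ, card_eq_zero, eq_empty_iff_forall_notMem]
  intro P hP
  obtain ⟨-, hcard, -, huniq⟩ := mem_assocPartitions.1 hP
  obtain ⟨B, ⟨hB, -⟩, -⟩ := huniq 0 (mem_univ _)
  simp [card_eq_zero.1 hcard] at hB

lemma assocStirling_zero_succ (k : ℕ) : assocStirling 0 (k + 1) = 0 := by
  rw [← card_assocPartitions_univ, card_eq_zero, eq_empty_iff_forall_notMem]
  intro P hP
  obtain ⟨-, hcard, hsize, -⟩ := mem_assocPartitions.1 hP
  obtain ⟨B, hB⟩ : P.Nonempty := card_pos.1 (by omega)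
  have h2 := hsize B hB
  rw [B.eq_empty_of_isEmpty, card_empty] at h2
  omega

lemma assocStirling_succ_succ (s k : ℕ) :
    assocStirling (s + 1) (k + 1) = ∑ j ∈ range s, s.choose j * assocStirling j k := by
  rw [← card_range (s + 1), ← card_assocPartitions, range_add_one,
    card_assocPartitions_insert notMem_range_self]
  simp_rw [card_assocPartitions]
  rw [sum_ssubsets_apply_card (fun j => assocStirling j k), card_range]
  simp only [smul_eq_mul]

lemma assocStirling_eq_zero_of_lt {s k : ℕ} (h : s < k) : assocStirling s k = 0 := by
  induction s using Nat.strong_induction_on generalizing k with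
  | _ s ih =>
    rcases k with _ | k
    · omega
    rcases s with _ | s
    · exact assocStirling_zero_succ k
    rw [assocStirling_succ_succ]
    refine sum_eq_zero fun j hj => ?_
    rw [mem_range] at hj
    rw [ih j (by omega) (by omega), mul_zero]

lemma integrable_exp_poissonMeasure (r : ℝ≥0) : Integrable (fun n : ℕ => exp (n : ℝ)) Po(r) := by
  refine integrable_poissonMeasure_iff.2 <|
    ((Real.summable_pow_div_factorial (r * exp 1)).mul_left (exp (-r))).congr fun n => ?_
  rw [Real.norm_of_nonneg (exp_pos _).le, ← Real.exp_one_pow, mul_pow]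
  ring

lemma integrable_sub_pow_poissonMeasure (r : ℝ≥0) (c : ℝ) (s : ℕ) :
    Integrable (fun n : ℕ => ((n : ℝ) - c) ^ s) Po(r) := by
  refine ((integrable_exp_poissonMeasure r).const_mul (s ! * exp |c|)).mono'
    .of_discrete (Eventually.of_forall fun n => ?_)
  have hfac : |(n : ℝ) - c| ^ s ≤ s ! * exp |(n : ℝ) - c| := by
    have := Real.pow_div_factorial_le_exp _ (abs_nonneg ((n : ℝ) - c)) s
    rwa [div_le_iff₀' (by positivity)] at this
  have hexp : exp |(n : ℝ) - c| ≤ exp |c| * exp n := by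
    rw [← exp_add]
    exact exp_le_exp.2 (by have := abs_sub (n : ℝ) c; rw [Nat.abs_cast] at this; linarith)
  rw [norm_pow, Real.norm_eq_abs]
  calc |(n : ℝ) - c| ^ s ≤ s ! * exp |(n : ℝ) - c| := hfac
    _ ≤ s ! * exp |c| * exp n := by rw [mul_assoc]; gcongr

lemma integral_natCast_mul_poissonMeasure (r : ℝ≥0) (f : ℕ → ℝ) :
    ∫ n, n * f n ∂Po(r) = r * ∫ n, f (n + 1) ∂Po(r) := by
  simp only [integral_poissonMeasure, smul_eq_mul, ← tsum_mul_left]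
  have hshift : ∀ n : ℕ, exp (-r) * r ^ (n + 1) / (n + 1)! * ((n + 1 : ℕ) * f (n + 1))
      = r * (exp (-r) * r ^ n / n ! * f (n + 1)) := by
    intro n
    rw [Nat.factorial_succ]
    push_cast
    field_simp
    ring
  -- No integrability is needed: the two series converge or diverge together.
  by_cases hsum : Summable fun n : ℕ => exp (-r) * r ^ n / n ! * (n * f n)
  · rw [hsum.tsum_eq_zero_add]
    simp only [CharP.cast_eq_zero, zero_mul, mul_zero, zero_add]
    exact tsum_congr hshift
  · rw [tsum_eq_zero_of_not_summable hsum, tsum_eq_zero_of_not_summable]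
    rw [← funext hshift]
    exact mt (summable_nat_add_iff (f := fun n : ℕ => exp (-r) * r ^ n / n ! * (n * f n)) 1).1 hsum

lemma integral_sub_pow_succ_poissonMeasure (r : ℝ≥0) (s : ℕ) :
    ∫ n, ((n : ℝ) - r) ^ (s + 1) ∂Po(r)
      = r * ∑ j ∈ range s, (s.choose j : ℝ) * ∫ n, ((n : ℝ) - r) ^ j ∂Po(r) := by
  have hint (j : ℕ) := integrable_sub_pow_poissonMeasure r r j
  have hsplit : ∫ n, (n : ℝ) * ((n : ℝ) - r) ^ s ∂Po(r)
      = ∫ n, ((n : ℝ) - r) ^ (s + 1) ∂Po(r) + r * ∫ n, ((n : ℝ) - r) ^ s ∂Po(r) := by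
    rw [← integral_const_mul, ← integral_add (hint _) ((hint s).const_mul _)]
    congr with n
    ring
  have hshift : ∫ n, (n : ℝ) * ((n : ℝ) - r) ^ s ∂Po(r)
      = r * ∑ j ∈ range (s + 1), (s.choose j : ℝ) * ∫ n, ((n : ℝ) - r) ^ j ∂Po(r) := by
    rw [integral_natCast_mul_poissonMeasure]
    congr 1
    simp_rw [← integral_const_mul]
    rw [← integral_finsetSum _ fun j _ => (hint j).const_mul _]
    refine integral_congr_ae (Eventually.of_forall fun n => ?_)
    simp only
    rw [Nat.cast_succ, add_sub_right_comm, add_pow]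
    refine Finset.sum_congr rfl fun j _ => ?_
    ring
  rw [Finset.sum_range_succ, Nat.choose_self] at hshift
  linear_combination hshift - hsplit

noncomputable def assocStirlingPoly (s : ℕ) (x : ℝ) : ℝ :=
  ∑ k ∈ range (s + 1), (assocStirling s k : ℝ) * x ^ k

lemma assocStirlingPoly_eq_sum_range {s n : ℕ} (h : s < n) (x : ℝ) :
    assocStirlingPoly s x = ∑ k ∈ range n, (assocStirling s k : ℝ) * x ^ k := by
  refine sum_subset (range_subset_range.2 h) fun k _ hk => ?_
  rw [assocStirling_eq_zero_of_lt (by simpa using hk), Nat.cast_zero, zero_mul]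

lemma assocStirlingPoly_zero (x : ℝ) : assocStirlingPoly 0 x = 1 := by
  simp [assocStirlingPoly, assocStirling_zero_zero]

lemma assocStirlingPoly_succ (s : ℕ) (x : ℝ) :
    assocStirlingPoly (s + 1) x = x * ∑ j ∈ range s, (s.choose j : ℝ) * assocStirlingPoly j x := by
  have hpoly : ∀ j ∈ range s, (s.choose j : ℝ) * assocStirlingPoly j x
      = s.choose j * ∑ k ∈ range (s + 1), (assocStirling j k : ℝ) * x ^ k := fun j hj => by
    rw [assocStirlingPoly_eq_sum_range (n := s + 1) (by simp at hj; omega)]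
  rw [sum_congr rfl hpoly, assocStirlingPoly, sum_range_succ', assocStirling_succ_zero]
  simp_rw [assocStirling_succ_succ]
  push_cast
  simp_rw [sum_mul, mul_sum]
  rw [sum_comm]
  simp only [zero_mul, add_zero]
  refine sum_congr rfl fun j _ => sum_congr rfl fun k _ => ?_
  ring

lemma assocStirlingPoly_mul_eq_sum (s : ℕ) (ρ x : ℝ) :
    assocStirlingPoly s (ρ * x) = ∑ k ∈ range (s + 1), (assocStirling s k * ρ ^ k) * x ^ k := by
  simp_rw [assocStirlingPoly, mul_pow, mul_assoc]

theorem integral_sub_pow_poissonMeasure (r : ℝ≥0) (s : ℕ) :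
    ∫ n, ((n : ℝ) - r) ^ s ∂Po(r) = assocStirlingPoly s r := by
  induction s using Nat.strong_induction_on with
  | _ s ih =>
    rcases s with _ | s
    · simp [assocStirlingPoly_zero]
    rw [integral_sub_pow_succ_poissonMeasure, assocStirlingPoly_succ]
    congr 1
    refine sum_congr rfl fun j hj => ?_
    rw [ih j (by simp at hj; omega)]

lemma integral_norm_sub_pow_poissonMeasure_le (r : ℝ≥0) (s : ℕ) :
    ∫ n, ‖((n : ℝ) - r) ^ s‖ ∂Po(r) ≤ 1 + assocStirlingPoly (2 * s) r := by
  have hle (t : ℝ) : ‖t ^ s‖ ≤ 1 + t ^ (2 * s) := by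
    have hsq : (|t| ^ s) ^ 2 = t ^ (2 * s) := by
      rw [← pow_mul, mul_comm, pow_mul, sq_abs, ← pow_mul]
    rw [norm_pow, Real.norm_eq_abs]
    nlinarith [sq_nonneg (|t| ^ s - 1)]
  calc ∫ n, ‖((n : ℝ) - r) ^ s‖ ∂Po(r) ≤ ∫ n, (1 + ((n : ℝ) - r) ^ (2 * s)) ∂Po(r) :=
        integral_mono (integrable_sub_pow_poissonMeasure r r s).norm
          ((integrable_const 1).add (integrable_sub_pow_poissonMeasure r r _)) fun n => hle _
    _ = 1 + assocStirlingPoly (2 * s) r := by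
        rw [integral_add (integrable_const 1) (integrable_sub_pow_poissonMeasure r r _),
          integral_sub_pow_poissonMeasure]
        simp

noncomputable def poissonRateKernel (ρ : ℝ) : Kernel ℝ ℕ where
  toFun x := Po((ρ * x).toNNReal)
  measurable' := Measure.measurable_of_measurable_coe _ fun B hB => by
    simp only [poissonMeasure, Measure.sum_apply _ hB, Measure.smul_apply, smul_eq_mul]
    fun_prop

instance (ρ : ℝ) : IsMarkovKernel (poissonRateKernel ρ) :=
  ⟨fun _ => inferInstanceAs (IsProbabilityMeasure Po(_))⟩

lemma poissonRateKernel_apply (ρ x : ℝ) : poissonRateKernel ρ x = Po((ρ * x).toNNReal) := rfl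

lemma integral_sub_pow_poissonRateKernel {ρ x : ℝ} (hρx : 0 ≤ ρ * x) (s : ℕ) :
    ∫ n, ((n : ℝ) - ρ * x) ^ s ∂(poissonRateKernel ρ x) = assocStirlingPoly s (ρ * x) := by
  have := integral_sub_pow_poissonMeasure (ρ * x).toNNReal s
  rwa [Real.coe_toNNReal _ hρx] at this

lemma integral_norm_sub_pow_poissonRateKernel_le {ρ x : ℝ} (hρx : 0 ≤ ρ * x) (s : ℕ) :
    ∫ n, ‖((n : ℝ) - ρ * x) ^ s‖ ∂(poissonRateKernel ρ x)
      ≤ 1 + assocStirlingPoly (2 * s) (ρ * x) := by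
  have := integral_norm_sub_pow_poissonMeasure_le (ρ * x).toNNReal s
  rwa [Real.coe_toNNReal _ hρx] at this

section Mixture

variable {Ω : Type*} [MeasurableSpace Ω] {μ : Measure Ω} {X : Ω → ℝ}

lemma integrable_assocStirlingPoly_mul (hmom : ∀ k : ℕ, Integrable (fun ω => X ω ^ k) μ)
    (s : ℕ) (ρ : ℝ) : Integrable (fun ω => assocStirlingPoly s (ρ * X ω)) μ := by
  simp_rw [assocStirlingPoly_mul_eq_sum]
  exact integrable_finsetSum _ fun k _ => (hmom k).const_mul _

lemma integral_assocStirlingPoly_mul (hmom : ∀ k : ℕ, Integrable (fun ω => X ω ^ k) μ)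
    (s : ℕ) (ρ : ℝ) :
    ∫ ω, assocStirlingPoly s (ρ * X ω) ∂μ
      = ∑ k ∈ range (s + 1), ρ ^ k * (∫ ω, X ω ^ k ∂μ) * (assocStirling s k : ℝ) := by
  simp_rw [assocStirlingPoly_mul_eq_sum]
  rw [integral_finsetSum _ fun k _ => (hmom k).const_mul _]
  refine sum_congr rfl fun k _ => ?_
  rw [integral_const_mul]
  ring

lemma CondPoisson.map_eq_compProd [IsFiniteMeasure μ] {Y : Ω → ℕ} {ρ : ℝ}
    (hcond : CondPoisson μ X Y ρ) (hX : Measurable X) (hY : Measurable Y) (hρ : 0 ≤ ρ)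
    (hXnn : ∀ ω, 0 ≤ X ω) :
    μ.map (fun ω => (X ω, Y ω)) = μ.map X ⊗ₘ poissonRateKernel ρ := by
  refine Measure.ext_prod fun {A B} hA hB => ?_
  rw [Measure.map_apply (hX.prodMk hY) (hA.prod hB), Measure.compProd_apply_prod hA hB,
    setLIntegral_map hA (Kernel.measurable_coe _ hB) hX]
  have hfiber (n : ℕ) : μ.restrict (X ⁻¹' A) (Y ⁻¹' {n})
      = ∫⁻ ω in X ⁻¹' A, poissonRateKernel ρ (X ω) {n} ∂μ := by
    rw [Measure.restrict_apply (hY (measurableSet_singleton n)), Set.inter_comm]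
    refine (hcond n A hA).trans (setLIntegral_congr_fun (hX hA) fun ω _ => ?_)
    rw [poissonRateKernel_apply, poissonMeasure_singleton,
      Real.coe_toNNReal _ (mul_nonneg hρ (hXnn ω)), mul_comm]
  have hκ (ω : Ω) : poissonRateKernel ρ (X ω) B = ∑' n : B, poissonRateKernel ρ (X ω) {↑n} := by
    simpa using (tsum_measure_preimage_singleton (μ := poissonRateKernel ρ (X ω)) B.to_countable
      (f := id) fun n _ => measurableSet_singleton n).symm
  calc μ ((fun ω => (X ω, Y ω)) ⁻¹' A ×ˢ B) = μ.restrict (X ⁻¹' A) (Y ⁻¹' B) := by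
        rw [Measure.restrict_apply (hY hB), Set.inter_comm]
        rfl
    _ = ∑' n : B, ∫⁻ ω in X ⁻¹' A, poissonRateKernel ρ (X ω) {↑n} ∂μ := by
        rw [← tsum_measure_preimage_singleton B.to_countable
          fun n _ => hY (measurableSet_singleton n)]
        simp_rw [hfiber]
    _ = ∫⁻ ω in X ⁻¹' A, poissonRateKernel ρ (X ω) B ∂μ := by
        simp_rw [hκ]
        exact (lintegral_tsum fun n =>
          ((Kernel.measurable_coe _ (measurableSet_singleton _)).comp hX).aemeasurable).symm

lemma measurable_natCast_sub_mul_pow (ρ : ℝ) (s : ℕ) :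
    Measurable fun p : ℝ × ℕ => ((p.2 : ℝ) - ρ * p.1) ^ s :=
  ((Measurable.of_discrete.comp measurable_snd).sub (measurable_fst.const_mul ρ)).pow_const s

lemma integrable_natCast_sub_mul_pow_compProd [IsFiniteMeasure μ] (hX : Measurable X)
    (hXnn : ∀ ω, 0 ≤ X ω) {ρ : ℝ} (hρ : 0 ≤ ρ) (hmom : ∀ k : ℕ, Integrable (fun ω => X ω ^ k) μ)
    (s : ℕ) :
    Integrable (fun p : ℝ × ℕ => ((p.2 : ℝ) - ρ * p.1) ^ s) (μ.map X ⊗ₘ poissonRateKernel ρ) := by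
  have hf := (measurable_natCast_sub_mul_pow ρ s).stronglyMeasurable
  rw [Measure.integrable_compProd_iff hf.aestronglyMeasurable]
  refine ⟨Eventually.of_forall fun x => ?_, ?_⟩
  · rw [poissonRateKernel_apply]
    exact integrable_sub_pow_poissonMeasure (ρ * x).toNNReal (ρ * x) s
  have hg := hf.norm.integral_kernel_prod_right' (κ := poissonRateKernel ρ)
  rw [integrable_map_measure hg.aestronglyMeasurable hX.aemeasurable]
  refine ((integrable_const 1).add (integrable_assocStirlingPoly_mul hmom (2 * s) ρ)).mono'
    (hg.comp_measurable hX).aestronglyMeasurable (Eventually.of_forall fun ω => ?_)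
  rw [Function.comp_apply, Real.norm_of_nonneg (integral_nonneg fun _ => norm_nonneg _)]
  exact integral_norm_sub_pow_poissonRateKernel_le (mul_nonneg hρ (hXnn ω)) s

end Mixture

theorem condPoisson_centered_moments
    {Ω : Type*} [MeasurableSpace Ω] (μ : Measure Ω) [IsProbabilityMeasure μ]
    (X : Ω → ℝ) (Y : Ω → ℕ) (ρ : ℝ) (hρ : 0 < ρ)
    (hX : Measurable X) (hY : Measurable Y) (hXnn : ∀ ω, 0 ≤ X ω)
    (hmom : ∀ s : ℕ, Integrable (fun ω => X ω ^ s) μ)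
    (hcond : CondPoisson μ X Y ρ) (s : ℕ) :
    ∫ ω, ((Y ω : ℝ) - ρ * X ω) ^ s ∂μ
      = ∑ k ∈ Finset.range (s + 1),
          ρ ^ k * (∫ ω, X ω ^ k ∂μ) * (assocStirling s k : ℝ) := by
  have hf := measurable_natCast_sub_mul_pow ρ s
  have hg := hf.stronglyMeasurable.integral_kernel_prod_right' (κ := poissonRateKernel ρ)
  calc ∫ ω, ((Y ω : ℝ) - ρ * X ω) ^ s ∂μ
      = ∫ p, ((p.2 : ℝ) - ρ * p.1) ^ s ∂(μ.map fun ω => (X ω, Y ω)) :=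
        (integral_map (hX.prodMk hY).aemeasurable hf.aestronglyMeasurable).symm
    _ = ∫ x, ∫ n, ((n : ℝ) - ρ * x) ^ s ∂(poissonRateKernel ρ x) ∂(μ.map X) := by
        rw [hcond.map_eq_compProd hX hY hρ.le hXnn, Measure.integral_compProd
          (integrable_natCast_sub_mul_pow_compProd hX hXnn hρ.le hmom s)]
    _ = ∫ ω, assocStirlingPoly s (ρ * X ω) ∂μ := by
        rw [integral_map hX.aemeasurable hg.aestronglyMeasurable]
        exact integral_congr_ae (Eventually.of_forall fun ω =>
          integral_sub_pow_poissonRateKernel (mul_nonneg hρ.le (hXnn ω)) s)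
    _ = _ := integral_assocStirlingPoly_mul hmom s ρ
end
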